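/- Let f : ℂ → ℂ, let F be a primitive of f on ℍ, let γ₁, …, γ_d be real 2×2 matrices with positive determinant, and let a ∈ ℂ be such that the Hecke eigenform relation Σ_{j=1}^{d} (f|₂γ_j)(z) = a·f(z) holds for all z ∈ ℍ. Then for all τ, w ∈ ℍ: a·(F(τ) − F(w)) = Σ_{j=1}^{d} (F(γ_j·τ) − F(γ_j·w)). -/

import Mathlib

/-!
Differentiating `z ↦ F (γ · z)` gives `(f|₂γ)(z)`, because `γ` maps `ℍ` to itself with derivative
`det γ · (cz+d)⁻²`. Hence `a · F` and `Σⱼ F ∘ γⱼ` are primitives of the same function on `ℍ`, and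
since `ℍ` is open and connected they differ by a constant.
-/

/-- The Möbius action of a real `2×2` matrix on `ℂ`: `A·z = (az+b)/(cz+d)`. -/
noncomputable def moebius (A : Matrix (Fin 2) (Fin 2) ℝ) (z : ℂ) : ℂ :=
  ((A 0 0 : ℂ) * z + (A 0 1 : ℂ)) / ((A 1 0 : ℂ) * z + (A 1 1 : ℂ))

/-- The weight-2 slash of `f : ℂ → ℂ` by `A`: `(f|₂A)(z) = det(A)·(cz+d)⁻²·f(A·z)`. -/
noncomputable def slashTwo (f : ℂ → ℂ) (A : Matrix (Fin 2) (Fin 2) ℝ) (z : ℂ) : ℂ :=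
  (A.det : ℂ) * ((A 1 0 : ℂ) * z + (A 1 1 : ℂ)) ^ (-2 : ℤ) * f (moebius A z)

open Complex

lemma moebius_denom_ne_zero {A : Matrix (Fin 2) (Fin 2) ℝ} (hdet : 0 < A.det)
    {z : ℂ} (hz : 0 < z.im) : (A 1 0 : ℂ) * z + (A 1 1 : ℂ) ≠ 0 := by
  intro h
  have him := congrArg Complex.im h
  have hre := congrArg Complex.re h
  simp only [add_im, mul_im, ofReal_re, ofReal_im, zero_mul, add_zero, zero_im, mul_eq_zero,
    hz.ne', or_false] at him
  simp only [add_re, mul_re, ofReal_re, ofReal_im, him, zero_mul, sub_zero, zero_add,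
    zero_re] at hre
  simp [Matrix.det_fin_two, him, hre] at hdet

lemma moebius_im (A : Matrix (Fin 2) (Fin 2) ℝ) (z : ℂ) :
    (moebius A z).im = A.det * z.im / normSq ((A 1 0 : ℂ) * z + (A 1 1 : ℂ)) := by
  rw [moebius, div_im, ← sub_div, Matrix.det_fin_two]
  congr 1
  simp only [add_im, add_re, mul_im, mul_re, ofReal_re, ofReal_im]
  ring

lemma moebius_im_pos {A : Matrix (Fin 2) (Fin 2) ℝ} (hdet : 0 < A.det)
    {z : ℂ} (hz : 0 < z.im) : 0 < (moebius A z).im := by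
  have hnormSq := normSq_pos.2 (moebius_denom_ne_zero hdet hz)
  rw [moebius_im]
  positivity

lemma hasDerivAt_moebius (A : Matrix (Fin 2) (Fin 2) ℝ) {z : ℂ}
    (hz : (A 1 0 : ℂ) * z + (A 1 1 : ℂ) ≠ 0) :
    HasDerivAt (moebius A) ((A.det : ℂ) * ((A 1 0 : ℂ) * z + (A 1 1 : ℂ)) ^ (-2 : ℤ)) z := by
  have hnum : HasDerivAt (fun z : ℂ => (A 0 0 : ℂ) * z + (A 0 1 : ℂ)) (A 0 0 : ℂ) z := by
    simpa using ((hasDerivAt_id z).const_mul (A 0 0 : ℂ)).add_const (A 0 1 : ℂ)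
  have hden : HasDerivAt (fun z : ℂ => (A 1 0 : ℂ) * z + (A 1 1 : ℂ)) (A 1 0 : ℂ) z := by
    simpa using ((hasDerivAt_id z).const_mul (A 1 0 : ℂ)).add_const (A 1 1 : ℂ)
  refine (hnum.div hden hz).congr_deriv ?_
  rw [Matrix.det_fin_two, zpow_neg, zpow_two]
  field_simp
  push_cast
  ring

lemma hasDerivAt_comp_moebius {f F : ℂ → ℂ} {A : Matrix (Fin 2) (Fin 2) ℝ} {z : ℂ}
    (hF : HasDerivAt F (f (moebius A z)) (moebius A z))
    (hz : (A 1 0 : ℂ) * z + (A 1 1 : ℂ) ≠ 0) :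
    HasDerivAt (fun z => F (moebius A z)) (slashTwo f A z) z := by
  rw [slashTwo, mul_comm]
  exact hF.comp z (hasDerivAt_moebius A hz)

lemma IsOpen.sub_eq_sub_of_hasDerivAt {𝕜 E : Type*} [RCLike 𝕜] [NormedAddCommGroup E]
    [NormedSpace 𝕜 E] {s : Set 𝕜} (hs : IsOpen s) (hs' : IsPreconnected s) {G H g : 𝕜 → E}
    (hG : ∀ z ∈ s, HasDerivAt G (g z) z) (hH : ∀ z ∈ s, HasDerivAt H (g z) z)
    {x y : 𝕜} (hx : x ∈ s) (hy : y ∈ s) : G x - G y = H x - H y := by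
  have hdiff : ∀ z ∈ s, HasDerivAt (fun z => G z - H z) 0 z := fun z hz => by
    simpa using (hG z hz).fun_sub (hH z hz)
  rw [sub_eq_sub_iff_sub_eq_sub]
  exact hs.is_const_of_deriv_eq_zero hs'
    (fun z hz => (hdiff z hz).differentiableAt.differentiableWithinAt)
    (fun z hz => (hdiff z hz).deriv) hx hy

/-- If `F` is a primitive of `f` on `ℍ` and `Σ_j (f|₂γ_j) = a·f` on `ℍ`
for matrices `γ₁, …, γ_d` of positive determinant, then for all `τ, w ∈ ℍ`,
`a·(F(τ) − F(w)) = Σ_j (F(γ_j·τ) − F(γ_j·w))`. -/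
theorem hecke_eigenform_primitive_relation (f F : ℂ → ℂ)
    (hF : ∀ z : ℂ, 0 < z.im → HasDerivAt F (f z) z)
    (d : ℕ) (γ : Fin d → Matrix (Fin 2) (Fin 2) ℝ) (hdet : ∀ j, 0 < (γ j).det)
    (a : ℂ) (heig : ∀ z : ℂ, 0 < z.im → ∑ j : Fin d, slashTwo f (γ j) z = a * f z) :
    ∀ τ w : ℂ, 0 < τ.im → 0 < w.im →
      a * (F τ - F w) = ∑ j : Fin d, (F (moebius (γ j) τ) - F (moebius (γ j) w)) := by
  intro τ w hτ hw
  have hopen : IsOpen {z : ℂ | 0 < z.im} := isOpen_lt continuous_const continuous_im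
  have hconn : IsPreconnected {z : ℂ | 0 < z.im} := (convex_halfSpace_im_gt 0).isPreconnected
  have hscaled : ∀ z : ℂ, 0 < z.im →
      HasDerivAt (fun z => a * F z) (∑ j : Fin d, slashTwo f (γ j) z) z := fun z hz => by
    rw [heig z hz]
    exact (hF z hz).const_mul a
  have hsum : ∀ z : ℂ, 0 < z.im →
      HasDerivAt (fun z => ∑ j : Fin d, F (moebius (γ j) z)) (∑ j : Fin d, slashTwo f (γ j) z) z :=
    fun z hz => HasDerivAt.fun_sum fun j _ => hasDerivAt_comp_moebius
      (hF _ (moebius_im_pos (hdet j) hz)) (moebius_denom_ne_zero (hdet j) hz)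
  rw [mul_sub, Finset.sum_sub_distrib]
  exact hopen.sub_eq_sub_of_hasDerivAt hconn hscaled hsum hτ hw
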